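/- Over single-agent S5 epistemic states where the accessibility relation is total and worlds have pairwise distinct valuations, applying any epistemic action (with preconditions of modal depth at most 1 and no postconditions) yields a state bisimilar to the submodel induced by some subset of the original worlds containing the designated world. Consequently, any plan over a finite set of such actions is equivalent (for goal satisfaction) to one of length at most the number of worlds of the initial state. -/

import Mathlib

/-- Modal formulas over a set of agents, atoms indexed by ℕ. -/
inductive Form (Agent : Type) : Type
  | falsum : Form Agent
  | atom : ℕ → Form Agent
  | neg : Form Agent → Form Agent
  | conj : Form Agent → Form Agent → Form Agent
  | know : Agent → Form Agent → Form Agent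

/-- A Kripke model: accessibility relations and valuation. -/
structure KripkeModel (Agent : Type) (W : Type) where
  R : Agent → W → W → Prop
  V : W → ℕ → Prop

/-- Satisfaction of a modal formula at a world. -/
def KripkeModel.sat {Agent W : Type} (M : KripkeModel Agent W) : W → Form Agent → Prop
  | _, .falsum => False
  | w, .atom p => M.V w p
  | w, .neg φ => ¬ M.sat w φ
  | w, .conj φ ψ => M.sat w φ ∧ M.sat w ψ
  | w, .know i φ => ∀ v, M.R i w v → M.sat v φ

/-- An event model: pointedless Kripke frame with preconditions on events. -/
structure EventModel (Agent : Type) (E : Type) where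
  Q : Agent → E → E → Prop
  pre : E → Form Agent

/-- The product update of a Kripke model with an event model: worlds are the
pairs surviving the preconditions, accessibility is componentwise, valuation
is inherited. -/
def productModel {Agent W E : Type} (M : KripkeModel Agent W) (A : EventModel Agent E) :
    KripkeModel Agent {p : W × E // M.sat p.1 (A.pre p.2)} where
  R i x y := M.R i x.1.1 y.1.1 ∧ A.Q i x.1.2 y.1.2
  V x n := M.V x.1.1 n

/-- An epistemic state: a pointed Kripke model. -/
structure EpiState (Agent : Type) where
  W : Type
  M : KripkeModel Agent W
  w : W

/-- An epistemic action: a pointed event model. -/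
structure EpiAction (Agent : Type) where
  E : Type
  A : EventModel Agent E
  e : E

/-- An action applies to a state when the designated event's precondition
holds at the designated world. -/
def EpiAction.applies {Agent : Type} (a : EpiAction Agent) (s : EpiState Agent) : Prop :=
  s.M.sat s.w (a.A.pre a.e)

/-- The product update of an epistemic state by an applicable epistemic action. -/
def EpiState.update {Agent : Type} (s : EpiState Agent) (a : EpiAction Agent) (h : a.applies s) :
    EpiState Agent where
  W := {p : s.W × a.E // s.M.sat p.1 (a.A.pre p.2)}
  M := productModel s.M a.A
  w := ⟨(s.w, a.e), h⟩

/-- `Exec s α t` : the sequence of actions `α` applies (left to right) to `s`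
and results in `t`. -/
inductive Exec {Agent : Type} : EpiState Agent → List (EpiAction Agent) → EpiState Agent → Prop
  | nil (s : EpiState Agent) : Exec s [] s
  | snoc {s t : EpiState Agent} {α : List (EpiAction Agent)} (a : EpiAction Agent)
      (hst : Exec s α t) (h : a.applies t) : Exec s (α ++ [a]) (t.update a h)

/-- `Z` is a bisimulation between `M` and `M'`. -/
def Bisim {Agent W W' : Type} (M : KripkeModel Agent W) (M' : KripkeModel Agent W')
    (Z : W → W' → Prop) : Prop :=
  ∀ w w', Z w w' →
    (∀ p, M.V w p ↔ M'.V w' p) ∧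
    (∀ i v, M.R i w v → ∃ v', M'.R i w' v' ∧ Z v v') ∧
    (∀ i v', M'.R i w' v' → ∃ v, M.R i w v ∧ Z v v')

/-- Two pointed models are bisimilar. -/
def Bisimilar {Agent : Type} (s t : EpiState Agent) : Prop :=
  ∃ Z : s.W → t.W → Prop, Bisim s.M t.M Z ∧ Z s.w t.w

/-- A formula is propositional (modal depth 0). -/
def Form.IsProp {Agent : Type} : Form Agent → Prop
  | .falsum => True
  | .atom _ => True
  | .neg φ => φ.IsProp
  | .conj φ ψ => φ.IsProp ∧ ψ.IsProp
  | .know _ _ => False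

/-- Modal depth of a formula. -/
def Form.depth {Agent : Type} : Form Agent → ℕ
  | .falsum => 0
  | .atom _ => 0
  | .neg φ => φ.depth
  | .conj φ ψ => max φ.depth ψ.depth
  | .know _ φ => φ.depth + 1

/-- The submodel of a state induced by a set of worlds containing the point. -/
def EpiState.sub {Agent : Type} (s : EpiState Agent) (S : Set s.W) (h : s.w ∈ S) : EpiState Agent where
  W := S
  M := { R := fun i x y => s.M.R i x.1 y.1, V := fun x n => s.M.V x.1 n }
  w := ⟨s.w, h⟩

/-!
In a single-agent state whose accessibility relation is total, updating with an action whose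
event relation is an equivalence keeps exactly the pairs `(v, g)` with `g` in the class of the
actual event, and all of them are mutually accessible. Forgetting the event component is then a
bisimulation onto the submodel of the worlds satisfying the precondition of some such event.
Iterating, every state reached by a plan is bisimilar to a submodel of the initial state, and the
set of its worlds can only shrink along the plan. An action that leaves that set unchanged leaves
the state unchanged up to bisimulation and can be dropped, so at most as many actions as there are
worlds are needed.
-/

theorem Bisim.sat_iff {Agent W W' : Type} {M : KripkeModel Agent W} {M' : KripkeModel Agent W'}
    {Z : W → W' → Prop} (hZ : Bisim M M' Z) (φ : Form Agent) :
    ∀ {w w'}, Z w w' → (M.sat w φ ↔ M'.sat w' φ) := by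
  induction φ with
  | falsum => exact fun _ => Iff.rfl
  | atom p => exact fun h => (hZ _ _ h).1 p
  | neg φ ih => exact fun h => not_congr (ih h)
  | conj φ ψ ihφ ihψ => exact fun h => and_congr (ihφ h) (ihψ h)
  | know i φ ih =>
    intro w w' h
    obtain ⟨-, hforth, hback⟩ := hZ w w' h
    constructor
    · intro hw v' hv'
      obtain ⟨v, hv, hZv⟩ := hback i v' hv'
      exact (ih hZv).1 (hw v hv)
    · intro hw' v hv
      obtain ⟨v', hv', hZv⟩ := hforth i v hv
      exact (ih hZv).2 (hw' v' hv')

namespace Bisimilar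

variable {Agent : Type}

theorem refl (s : EpiState Agent) : Bisimilar s s := by
  refine ⟨Eq, ?_, rfl⟩
  rintro w _ rfl
  exact ⟨fun _ => Iff.rfl, fun _ v hv => ⟨v, hv, rfl⟩, fun _ v hv => ⟨v, hv, rfl⟩⟩

theorem symm {s t : EpiState Agent} (h : Bisimilar s t) : Bisimilar t s := by
  obtain ⟨Z, hZ, hpt⟩ := h
  refine ⟨flip Z, fun w w' h => ?_, hpt⟩
  obtain ⟨hV, hforth, hback⟩ := hZ w' w h
  exact ⟨fun p => (hV p).symm, hback, hforth⟩

theorem trans {s t u : EpiState Agent} (h₁ : Bisimilar s t) (h₂ : Bisimilar t u) :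
    Bisimilar s u := by
  obtain ⟨Z₁, hZ₁, hpt₁⟩ := h₁
  obtain ⟨Z₂, hZ₂, hpt₂⟩ := h₂
  refine ⟨Relation.Comp Z₁ Z₂, ?_, ⟨t.w, hpt₁, hpt₂⟩⟩
  rintro w w' ⟨y, hwy, hyw'⟩
  obtain ⟨hV₁, hforth₁, hback₁⟩ := hZ₁ w y hwy
  obtain ⟨hV₂, hforth₂, hback₂⟩ := hZ₂ y w' hyw'
  refine ⟨fun p => (hV₁ p).trans (hV₂ p), fun i v hv => ?_, fun i v' hv' => ?_⟩
  · obtain ⟨y', hy', hvy'⟩ := hforth₁ i v hv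
    obtain ⟨v', hv', hy'v'⟩ := hforth₂ i y' hy'
    exact ⟨v', hv', y', hvy', hy'v'⟩
  · obtain ⟨y', hy', hy'v'⟩ := hback₂ i v' hv'
    obtain ⟨v, hv, hvy'⟩ := hback₁ i y' hy'
    exact ⟨v, hv, y', hvy', hy'v'⟩

theorem sat_iff {s t : EpiState Agent} (h : Bisimilar s t) (φ : Form Agent) :
    s.M.sat s.w φ ↔ t.M.sat t.w φ :=
  let ⟨_, hZ, hpt⟩ := h
  hZ.sat_iff φ hpt

theorem applies {s t : EpiState Agent} (h : Bisimilar s t) {a : EpiAction Agent}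
    (ha : a.applies s) : a.applies t :=
  (h.sat_iff _).1 ha

theorem update {s t : EpiState Agent} (h : Bisimilar s t) (a : EpiAction Agent)
    (hs : a.applies s) (ht : a.applies t) : Bisimilar (s.update a hs) (t.update a ht) := by
  obtain ⟨Z, hZ, hpt⟩ := h
  refine ⟨fun x y => Z x.1.1 y.1.1 ∧ x.1.2 = y.1.2, ?_, hpt, rfl⟩
  rintro ⟨⟨u, f⟩, _⟩ ⟨⟨v, g⟩, _⟩ ⟨huv, hfg : f = g⟩
  subst hfg
  obtain ⟨hV, hforth, hback⟩ := hZ u v huv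
  refine ⟨hV, ?_, ?_⟩
  · rintro i ⟨⟨u', f'⟩, hu'⟩ ⟨hu, hf⟩
    obtain ⟨v', hv, hZv⟩ := hforth i u' hu
    exact ⟨⟨(v', f'), (hZ.sat_iff _ hZv).1 hu'⟩, ⟨hv, hf⟩, hZv, rfl⟩
  · rintro i ⟨⟨v', f'⟩, hv'⟩ ⟨hv, hf⟩
    obtain ⟨u', hu, hZu⟩ := hback i v' hv
    exact ⟨⟨(u', f'), (hZ.sat_iff _ hZu).2 hv'⟩, ⟨hu, hf⟩, hZu, rfl⟩

end Bisimilar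

namespace EpiState

theorem bisimilar_sub_univ {Agent : Type} (s : EpiState Agent) :
    Bisimilar s (s.sub Set.univ (Set.mem_univ _)) := by
  refine ⟨fun u v => u = v.1, ?_, rfl⟩
  rintro u ⟨_, -⟩ rfl
  exact ⟨fun _ => Iff.rfl, fun _ v hv => ⟨⟨v, trivial⟩, hv, rfl⟩, fun _ v hv => ⟨v.1, hv, rfl⟩⟩

theorem sub_sub_bisimilar {Agent : Type} (s : EpiState Agent) {S : Set s.W} (hw : s.w ∈ S)
    {T : Set (s.sub S hw).W} (hwT : (s.sub S hw).w ∈ T) :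
    Bisimilar ((s.sub S hw).sub T hwT) (s.sub (Subtype.val '' T) ⟨_, hwT, rfl⟩) := by
  refine ⟨fun u v => u.1.1 = v.1, ?_, rfl⟩
  rintro u ⟨_, -⟩ rfl
  refine ⟨fun _ => Iff.rfl, fun _ v hv => ⟨⟨v.1.1, v.1, v.2, rfl⟩, hv, rfl⟩, ?_⟩
  rintro _ ⟨_, v, hv, rfl⟩ huv
  exact ⟨⟨v, hv⟩, huv, rfl⟩

def survivors (s : EpiState Unit) (a : EpiAction Unit) : Set s.W :=
  {v | ∃ f, a.A.Q () a.e f ∧ s.M.sat v (a.A.pre f)}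

theorem update_bisimilar_sub_survivors (s : EpiState Unit) (htot : ∀ u v : s.W, s.M.R () u v)
    (a : EpiAction Unit) (ha : a.applies s) (hQ : Equivalence (a.A.Q ())) :
    Bisimilar (s.update a ha) (s.sub (s.survivors a) ⟨a.e, hQ.refl _, ha⟩) := by
  refine ⟨fun x y => x.1.1 = y.1 ∧ a.A.Q () a.e x.1.2, ?_, rfl, hQ.refl _⟩
  rintro ⟨⟨u, f⟩, _⟩ ⟨v, _⟩ ⟨huv : u = v, hef⟩
  subst huv
  refine ⟨fun _ => Iff.rfl, ?_, ?_⟩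
  · rintro ⟨⟩ ⟨⟨u', f'⟩, hu'⟩ ⟨-, hff'⟩
    have hef' := hQ.trans hef hff'
    exact ⟨⟨u', f', hef', hu'⟩, htot _ _, rfl, hef'⟩
  · rintro ⟨⟩ ⟨v', f', hef', hv'⟩ -
    exact ⟨⟨(v', f'), hv'⟩, ⟨htot _ _, hQ.trans (hQ.symm hef) hef'⟩, rfl, hef'⟩

theorem exists_subset_bisimilar_update_sub (s : EpiState Unit)
    (htot : ∀ u v : s.W, s.M.R () u v) {S : Set s.W} (hw : s.w ∈ S) (a : EpiAction Unit)
    (ha : a.applies (s.sub S hw)) (hQ : Equivalence (a.A.Q ())) :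
    ∃ S' ⊆ S, ∃ hw' : s.w ∈ S', Bisimilar ((s.sub S hw).update a ha) (s.sub S' hw') := by
  refine ⟨_, ?_, _, ((s.sub S hw).update_bisimilar_sub_survivors (fun u v => htot u.1 v.1) a ha
    hQ).trans (s.sub_sub_bisimilar hw _)⟩
  rintro _ ⟨v, -, rfl⟩
  exact v.2

end EpiState

/-- Each action kept in the shortened plan strictly shrinks `S`, which pays for it in the bound. -/
theorem Exec.exists_short_bisimilar {s : EpiState Unit} [Finite s.W]
    (htot : ∀ u v : s.W, s.M.R () u v) {α : List (EpiAction Unit)} {t : EpiState Unit}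
    (hex : Exec s α t) (hQ : ∀ a ∈ α, Equivalence (a.A.Q ())) :
    ∃ (α' : List (EpiAction Unit)) (t' : EpiState Unit) (S : Set s.W) (hw : s.w ∈ S),
      α' ⊆ α ∧ Exec s α' t' ∧ Bisimilar t t' ∧ Bisimilar t' (s.sub S hw) ∧
      α'.length + S.ncard ≤ Nat.card s.W := by
  induction hex with
  | nil =>
    exact ⟨[], s, Set.univ, trivial, List.nil_subset _, .nil s, .refl s, s.bisimilar_sub_univ,
      by simp [Set.ncard_univ]⟩
  | @snoc t α a hex ha ih =>
    obtain ⟨α', t', S, hw, hsub, hex', htt', ht'S, hlen⟩ :=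
      ih fun b hb => hQ b (List.mem_append_left _ hb)
    have ha' : a.applies t' := htt'.applies ha
    have haS : a.applies (s.sub S hw) := ht'S.applies ha'
    obtain ⟨S', hS'S, hw', hS'⟩ := s.exists_subset_bisimilar_update_sub htot hw a haS
      (hQ a (by simp))
    have hupdate : Bisimilar (t'.update a ha') (s.sub S' hw') := (ht'S.update a ha' haS).trans hS'
    rcases hS'S.eq_or_ssubset with rfl | hlt
    · exact ⟨α', t', S', hw', List.subset_append_of_subset_left _ hsub, hex',
        (htt'.update a ha ha').trans (hupdate.trans ht'S.symm), ht'S, hlen⟩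
    · have hcard := Set.ncard_lt_ncard hlt (Set.toFinite S)
      refine ⟨α' ++ [a], t'.update a ha', S', hw', by simp [hsub],
        hex'.snoc a ha', htt'.update a ha ha', hupdate, ?_⟩
      rw [List.length_append, List.length_singleton]
      omega

theorem s5_update_deletes_and_plans_bounded_general (s : EpiState Unit) [Fintype s.W]
    (htot : ∀ u v : s.W, s.M.R () u v) :
    (∀ (a : EpiAction Unit) (ha : a.applies s),
        (∀ f : a.E, (a.A.pre f).depth ≤ 1) → Equivalence (a.A.Q ()) →
        ∃ (S : Set s.W) (hw : s.w ∈ S),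
          Bisimilar (s.update a ha) (s.sub S hw)) ∧
    (∀ acts : List (EpiAction Unit),
        (∀ a ∈ acts, (∀ f : a.E, (a.A.pre f).depth ≤ 1) ∧ Equivalence (a.A.Q ())) →
        ∀ φ : Form Unit,
        (∃ (α : List (EpiAction Unit)) (t : EpiState Unit),
            (∀ a ∈ α, a ∈ acts) ∧ Exec s α t ∧ t.M.sat t.w φ) →
        (∃ (α : List (EpiAction Unit)) (t : EpiState Unit),
            (∀ a ∈ α, a ∈ acts) ∧ α.length ≤ Fintype.card s.W ∧
            Exec s α t ∧ t.M.sat t.w φ)) := by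
  refine ⟨fun a ha _ hQ => ⟨_, _, s.update_bisimilar_sub_survivors htot a ha hQ⟩, ?_⟩
  rintro acts hacts φ ⟨α, t, hα, hex, hφ⟩
  obtain ⟨α', t', S, hw, hα', hex', htt', -, hlen⟩ :=
    hex.exists_short_bisimilar htot fun a ha => (hacts a (hα a ha)).2
  refine ⟨α', t', fun a ha => hα a (hα' ha), ?_, hex', (htt'.sat_iff φ).1 hφ⟩
  rw [← Nat.card_eq_fintype_card]
  omega

/-- Over a single-agent S5 state with total accessibility and
pairwise distinct valuations, updating by any S5 epistemic action with
depth-≤1 preconditions yields a state bisimilar to an induced submodel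
containing the point; consequently plans can be bounded in length by the
number of worlds. -/
theorem s5_update_deletes_and_plans_bounded (s : EpiState Unit) [Fintype s.W]
    (htot : ∀ u v : s.W, s.M.R () u v)
    (hdistinct : ∀ u v : s.W, (∀ p, s.M.V u p ↔ s.M.V v p) → u = v) :
    (∀ (a : EpiAction Unit) (ha : a.applies s),
        (∀ f : a.E, (a.A.pre f).depth ≤ 1) → Equivalence (a.A.Q ()) →
        ∃ (S : Set s.W) (hw : s.w ∈ S),
          Bisimilar (s.update a ha) (s.sub S hw)) ∧
    (∀ acts : List (EpiAction Unit),
        (∀ a ∈ acts, (∀ f : a.E, (a.A.pre f).depth ≤ 1) ∧ Equivalence (a.A.Q ())) →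
        ∀ φ : Form Unit,
        (∃ (α : List (EpiAction Unit)) (t : EpiState Unit),
            (∀ a ∈ α, a ∈ acts) ∧ Exec s α t ∧ t.M.sat t.w φ) →
        (∃ (α : List (EpiAction Unit)) (t : EpiState Unit),
            (∀ a ∈ α, a ∈ acts) ∧ α.length ≤ Fintype.card s.W ∧
            Exec s α t ∧ t.M.sat t.w φ)) :=
  s5_update_deletes_and_plans_bounded_general s htot
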